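/- arXiv:1608.02005 — 7 statements merged into one kernel-verified Lean document; each statement's English description precedes it below -/
import Mathlib

section
/- Let A be a finite abelian group with |A| ≥ 2, let S be a set, let f : A → S, and let m ≥ 1. For u ∈ A let c_u := |{x ∈ A : f(x) = f(x+u)}| and let C := max_{u ≠ 0} c_u. Then the number of tuples V = (v₁,…,v_m) ∈ A^m for which the map f_V : A → S^m, f_V(x) := (f(x+v₁),…,f(x+v_m)), fails to be injective is at most |A|² · C^m. Equivalently, for V chosen uniformly at random from A^m, Pr(f_V not injective) ≤ |A|² · (1−γ_min)^m, where γ_min := min_{u≠0} Pr_x(f(x) ≠ f(x+u)). -/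
/-- Injectivization bound (Gharibi): for a function `f : A → S` on a finite abelian
group `A` with `|A| ≥ 2`, letting `c_u = |{x : f x = f (x+u)}|` and
`C = max_{u ≠ 0} c_u`, the number of tuples `V ∈ A^m` for which
`f_V : x ↦ (f (x+v₁), …, f (x+v_m))` is not injective is at most `|A|² · C^m`. -/
theorem injectivization_counting_bound
    {A : Type*} [AddCommGroup A] [Fintype A] [DecidableEq A]
    {S : Type*} [DecidableEq S]
    (hA : 2 ≤ Fintype.card A) (f : A → S) (m : ℕ) (hm : 1 ≤ m)
    (C : ℕ)
    (hC : C = (Finset.univ.filter (fun u : A => u ≠ 0)).sup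
      (fun u => (Finset.univ.filter (fun x : A => f x = f (x + u))).card)) :
    (Finset.univ.filter (fun V : Fin m → A =>
        ¬ Function.Injective (fun x : A => fun i : Fin m => f (x + V i)))).card
      ≤ (Fintype.card A) ^ 2 * C ^ m := by
  classical
  set P : Finset (A × A) := Finset.univ.filter (fun p : A × A => p.1 ≠ p.2) with hP
  have hsub : (Finset.univ.filter (fun V : Fin m → A =>
        ¬ Function.Injective (fun x : A => fun i : Fin m => f (x + V i)))) ⊆
      P.biUnion (fun p => Finset.univ.filter
        (fun V : Fin m → A => ∀ i, f (p.1 + V i) = f (p.2 + V i))) := by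
    intro V hV
    simp only [Finset.mem_filter, Finset.mem_univ, true_and] at hV
    rw [Function.not_injective_iff] at hV
    obtain ⟨x, y, hxy, hne⟩ := hV
    refine Finset.mem_biUnion.2 ⟨(x, y), ?_, ?_⟩
    · simp [hP, hne]
    · simp only [Finset.mem_filter, Finset.mem_univ, true_and]
      intro i; exact congrFun hxy i
  -- per-pair bound
  have hpair : ∀ p ∈ P, (Finset.univ.filter
      (fun V : Fin m → A => ∀ i, f (p.1 + V i) = f (p.2 + V i))).card ≤ C ^ m := by
    rintro ⟨x, y⟩ hp
    simp only [hP, Finset.mem_filter, Finset.mem_univ, true_and] at hp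
    have hfil : (Finset.univ.filter
        (fun V : Fin m → A => ∀ i, f (x + V i) = f (y + V i))) =
        Fintype.piFinset (fun _ : Fin m =>
          Finset.univ.filter (fun v : A => f (x + v) = f (y + v))) := by
      ext V
      simp [Fintype.mem_piFinset]
    rw [hfil, Fintype.card_piFinset]
    have hc : (Finset.univ.filter (fun v : A => f (x + v) = f (y + v))).card ≤ C := by
      have hcard : (Finset.univ.filter (fun v : A => f (x + v) = f (y + v))).card =
          (Finset.univ.filter (fun z : A => f z = f (z + (y - x)))).card := by
        apply Finset.card_bij (fun v _ => x + v)
        · intro v hv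
          simp only [Finset.mem_filter, Finset.mem_univ, true_and] at hv ⊢
          have : x + v + (y - x) = y + v := by abel
          rw [this]; exact hv
        · intro a _ b _ h
          exact add_left_cancel h
        · intro z hz
          refine ⟨z - x, ?_, by abel⟩
          simp only [Finset.mem_filter, Finset.mem_univ, true_and] at hz ⊢
          have h1 : x + (z - x) = z := by abel
          have h2 : y + (z - x) = z + (y - x) := by abel
          rw [h1, h2]; exact hz
      rw [hcard, hC]
      exact Finset.le_sup (f := fun u => (Finset.univ.filter (fun x : A => f x = f (x + u))).card)
        (by simp [sub_ne_zero.2 (Ne.symm hp)])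
    calc ∏ _i : Fin m, (Finset.univ.filter (fun v : A => f (x + v) = f (y + v))).card
        ≤ ∏ _i : Fin m, C := Finset.prod_le_prod' (fun _ _ => hc)
      _ = C ^ m := by simp
  calc (Finset.univ.filter (fun V : Fin m → A =>
        ¬ Function.Injective (fun x : A => fun i : Fin m => f (x + V i)))).card
      ≤ (P.biUnion (fun p => Finset.univ.filter
        (fun V : Fin m → A => ∀ i, f (p.1 + V i) = f (p.2 + V i)))).card :=
        Finset.card_le_card hsub
    _ ≤ ∑ p ∈ P, (Finset.univ.filter
        (fun V : Fin m → A => ∀ i, f (p.1 + V i) = f (p.2 + V i))).card :=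
        Finset.card_biUnion_le
    _ ≤ ∑ _p ∈ P, C ^ m := Finset.sum_le_sum hpair
    _ = P.card * C ^ m := by rw [Finset.sum_const, smul_eq_mul]
    _ ≤ (Fintype.card A) ^ 2 * C ^ m := by
        apply Nat.mul_le_mul_right
        calc P.card ≤ (Finset.univ : Finset (A × A)).card := Finset.card_le_card (Finset.filter_subset _ _)
          _ = (Fintype.card A) ^ 2 := by simp [Fintype.card_prod, sq]
end

section
/- Let A be a finite abelian group of order v ≥ 2, let D ⊆ A be a (v,k,λ)-difference set with k > λ, and let f : A → {0,1} be the characteristic function of D. If m is a natural number with m ≥ (v/(2(k−λ)))·(2·log₂ v + 6), then the number of tuples V = (v₁,…,v_m) ∈ A^m for which the map f_V : A → {0,1}^m, f_V(x) := (f(x+v₁),…,f(x+v_m)), is not injective is at most v^m/64; equivalently, for V uniform over A^m, f_V is injective with probability at least 63/64. -/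
open Finset

private lemma dsinj_real (v k l s m : ℕ) (hv2 : 2 ≤ v) (hkl : l < k)
    (hs : s + 2 * k = v + 2 * l)
    (hm : ((v : ℝ) / (2 * ((k : ℝ) - l))) * (2 * Real.logb 2 v + 6) ≤ m) :
    (v:ℝ)^2 * (s:ℝ)^m ≤ (v:ℝ)^m / 64 := by
  have hvR : (2:ℝ) ≤ v := by exact_mod_cast hv2
  have hv0 : (0:ℝ) < v := by linarith
  have he : (0:ℝ) < (k:ℝ) - l := by
    have : (l:ℝ) < k := by exact_mod_cast hkl
    linarith
  have hsR : (s:ℝ) = v - 2 * ((k:ℝ) - l) := by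
    have := congrArg (Nat.cast : ℕ → ℝ) hs
    push_cast at this
    linarith
  set t : ℝ := 2 * ((k:ℝ) - l) / v with ht
  have ht0 : 0 < t := by positivity
  have hr0 : (0:ℝ) ≤ (s:ℝ)/v := by positivity
  have hrt : (s:ℝ)/v = 1 - t := by
    rw [hsR, ht]; field_simp
  -- t * m ≥ 2 log v + log 64
  have hlog2 : Real.log 2 ≤ 1 := by
    have := Real.log_le_sub_one_of_pos (by norm_num : (0:ℝ) < 2)
    linarith
  have hlogv : 0 ≤ Real.log v := Real.log_nonneg (by linarith)
  have hC : 2 * Real.log v + Real.log 64 ≤ 2 * Real.logb 2 v + 6 := by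
    have h2 : (0:ℝ) < Real.log 2 := Real.log_pos (by norm_num)
    have : Real.log v ≤ Real.logb 2 v := by
      rw [Real.logb, le_div_iff₀ h2]
      nlinarith
    have h64 : Real.log 64 = 6 * Real.log 2 := by
      rw [show (64:ℝ) = 2 ^ 6 by norm_num, Real.log_pow]
      push_cast; ring
    nlinarith
  have htm : 2 * Real.log v + Real.log 64 ≤ t * m := by
    have hv2e : (v:ℝ) / (2 * ((k:ℝ) - l)) = 1 / t := by
      rw [ht]; field_simp
    rw [hv2e] at hm
    calc 2 * Real.log v + Real.log 64 ≤ 2 * Real.logb 2 v + 6 := hC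
      _ = t * (1/t * (2 * Real.logb 2 v + 6)) := by field_simp
      _ ≤ t * m := mul_le_mul_of_nonneg_left hm (le_of_lt ht0)
  -- (s/v)^m ≤ exp (-(t*m))
  have hrexp : ((s:ℝ)/v) ^ m ≤ Real.exp (-(t * m)) := by
    have h1 : (s:ℝ)/v ≤ Real.exp (-t) := by
      rw [hrt]
      have := Real.add_one_le_exp (-t)
      linarith
    calc ((s:ℝ)/v) ^ m ≤ Real.exp (-t) ^ m := pow_le_pow_left₀ hr0 h1 m
      _ = Real.exp (-(t*m)) := by
          rw [← Real.exp_nat_mul]; ring_nf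
  have hexp : Real.exp (-(t * m)) ≤ 1 / (64 * (v:ℝ)^2) := by
    have h1 : Real.exp (-(t*m)) ≤ Real.exp (-(2 * Real.log v + Real.log 64)) :=
      Real.exp_le_exp.mpr (by linarith)
    have h2 : Real.exp (-(2 * Real.log v + Real.log 64)) = 1 / (64 * (v:ℝ)^2) := by
      have hlv : (2:ℝ) * Real.log v = Real.log ((v:ℝ)^2) := by
        rw [Real.log_pow]; push_cast; ring
      rw [Real.exp_neg, Real.exp_add, hlv, Real.exp_log (by positivity),
        Real.exp_log (by norm_num)]
      field_simp
    linarith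
  have key : ((s:ℝ)/v) ^ m ≤ 1 / (64 * (v:ℝ)^2) := le_trans hrexp hexp
  have hsv : (s:ℝ) ^ m = ((s:ℝ)/v)^m * (v:ℝ)^m := by
    rw [div_pow]; field_simp
  rw [hsv]
  have hvm : (0:ℝ) ≤ (v:ℝ)^m := by positivity
  calc (v:ℝ)^2 * (((s:ℝ)/v)^m * (v:ℝ)^m)
      ≤ (v:ℝ)^2 * ((1 / (64 * (v:ℝ)^2)) * (v:ℝ)^m) := by
        apply mul_le_mul_of_nonneg_left _ (by positivity)
        exact mul_le_mul_of_nonneg_right key hvm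
    _ = (v:ℝ)^m / 64 := by field_simp

/-- Injectivization of shifted-difference-set instances: for the characteristic
function `f` of a `(v,k,λ)`-difference set with `k > λ` in a finite abelian group
of order `v ≥ 2`, if `m ≥ (v/(2(k−λ)))·(2·log₂ v + 6)`, then the number of tuples
`V ∈ A^m` for which `f_V : x ↦ (f (x+v₁), …, f (x+v_m))` fails to be injective is
at most `v^m / 64`; i.e. a uniformly random `V` yields an injective `f_V` with
probability at least `63/64`. -/
theorem difference_set_injectivization
    {A : Type*} [AddCommGroup A] [Fintype A] [DecidableEq A]
    (v k l : ℕ) (hv : Fintype.card A = v) (hv2 : 2 ≤ v)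
    (D : Finset A) (hk : D.card = k) (hl : 1 ≤ l) (hkl : l < k)
    (hD : ∀ a : A, a ≠ 0 →
      ((D ×ˢ D).filter (fun p => p.1 - p.2 = a)).card = l)
    (f : A → Fin 2) (hf : ∀ x : A, f x = if x ∈ D then 1 else 0)
    (m : ℕ)
    (hm : ((v : ℝ) / (2 * ((k : ℝ) - (l : ℝ)))) * (2 * Real.logb 2 (v : ℝ) + 6)
      ≤ (m : ℝ)) :
    ((Finset.univ.filter (fun V : Fin m → A =>
        ¬ Function.Injective (fun x : A => fun i : Fin m => f (x + V i)))).card : ℝ)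
      ≤ (v : ℝ) ^ m / 64 := by
  classical
  set S : A → A → Finset A := fun x y => univ.filter (fun w => f (x + w) = f (y + w)) with hSdef
  have hcard : ∀ x y : A, x ≠ y → (S x y).card + 2 * k = v + 2 * l := by
    intro x y hxy
    set P : Finset A := univ.filter (fun w => x + w ∈ D) with hPdef
    set Q : Finset A := univ.filter (fun w => y + w ∈ D) with hQdef
    have hPcard : P.card = k := by
      have : P = D.image (fun d => d - x) := by
        ext w
        simp only [hPdef, mem_filter, mem_univ, true_and, mem_image]
        constructor
        · intro h; exact ⟨x + w, h, by abel⟩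
        · rintro ⟨d, hd, rfl⟩; simpa [add_sub_cancel] using hd
      rw [this, Finset.card_image_of_injective _ (sub_left_injective), hk]
    have hQcard : Q.card = k := by
      have : Q = D.image (fun d => d - y) := by
        ext w
        simp only [hQdef, mem_filter, mem_univ, true_and, mem_image]
        constructor
        · intro h; exact ⟨y + w, h, by abel⟩
        · rintro ⟨d, hd, rfl⟩; simpa [add_sub_cancel] using hd
      rw [this, Finset.card_image_of_injective _ (sub_left_injective), hk]
    have hPQcard : (P ∩ Q).card = l := by
      rw [← hD (x - y) (sub_ne_zero.mpr hxy)]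
      apply Finset.card_bij (fun w _ => ((x + w, y + w) : A × A))
      · intro w hw
        simp only [hPdef, hQdef, mem_inter, mem_filter, mem_univ, true_and] at hw
        simp only [mem_filter, mem_product]
        exact ⟨⟨hw.1, hw.2⟩, by abel⟩
      · intro w1 h1 w2 h2 h
        have := congrArg Prod.fst h
        simpa using this
      · rintro ⟨d1, d2⟩ hd
        simp only [mem_filter, mem_product] at hd
        refine ⟨d1 - x, ?_, ?_⟩
        · simp only [hPdef, hQdef, mem_inter, mem_filter, mem_univ, true_and]
          constructor
          · simpa [add_sub_cancel] using hd.1.1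
          · have : y + (d1 - x) = d2 := by
              have := hd.2
              have : d2 = d1 - (x - y) := by rw [← this]; abel
              rw [this]; abel
            rw [this]; exact hd.1.2
        · have h2 : y + (d1 - x) = d2 := by
            have hh := hd.2
            have : d2 = d1 - (x - y) := by rw [← hh]; abel
            rw [this]; abel
          simp [h2, add_sub_cancel]
    -- the "differ" set
    set T : Finset A := univ.filter (fun w => ¬ f (x + w) = f (y + w)) with hTdef
    have hST : (S x y).card + T.card = v := by
      have h := Finset.card_filter_add_card_filter_not
        (s := (univ : Finset A)) (p := fun w => f (x + w) = f (y + w))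
      simpa [hSdef, hTdef, Finset.card_univ, hv] using h
    have hT : T = (P \ Q) ∪ (Q \ P) := by
      ext w
      have hff : ∀ a b : A, (¬ f a = f b) ↔ ¬ (a ∈ D ↔ b ∈ D) := by
        intro a b
        rw [hf a, hf b]
        by_cases ha : a ∈ D <;> by_cases hb : b ∈ D <;> simp [ha, hb]
      simp only [hTdef, hPdef, hQdef, mem_filter, mem_univ, true_and, mem_union, mem_sdiff]
      rw [hff]
      tauto
    have hTcard : T.card + 2 * l = 2 * k := by
      have hdisj : Disjoint (P \ Q) (Q \ P) := disjoint_sdiff_sdiff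
      rw [hT, Finset.card_union_of_disjoint hdisj]
      have h1 : (P \ Q).card + (P ∩ Q).card = P.card := Finset.card_sdiff_add_card_inter P Q
      have h2 : (Q \ P).card + (Q ∩ P).card = Q.card := Finset.card_sdiff_add_card_inter Q P
      rw [Finset.inter_comm] at h2
      omega
    omega
  -- get a pair to establish arithmetic
  obtain ⟨x₀, y₀, hxy₀⟩ := Fintype.exists_pair_of_one_lt_card (by omega : 1 < Fintype.card A)
  have h2k : 2 * k ≤ v + 2 * l := by
    have := hcard x₀ y₀ hxy₀
    omega
  set s : ℕ := v + 2 * l - 2 * k with hsdef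
  have hScard : ∀ x y : A, x ≠ y → (S x y).card = s := by
    intro x y hxy
    have := hcard x y hxy
    omega
  -- union bound
  set bad := (Finset.univ.filter (fun V : Fin m → A =>
        ¬ Function.Injective (fun x : A => fun i : Fin m => f (x + V i)))) with hbad
  have hsub : bad ⊆ (univ : Finset A).offDiag.biUnion
      (fun p => Fintype.piFinset (fun _ : Fin m => S p.1 p.2)) := by
    intro V hV
    simp only [hbad, mem_filter, mem_univ, true_and] at hV
    rw [Function.not_injective_iff] at hV
    obtain ⟨a, b, hab, hne⟩ := hV
    rw [Finset.mem_biUnion]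
    refine ⟨(a, b), by simp [Finset.mem_offDiag, hne], ?_⟩
    rw [Fintype.mem_piFinset]
    intro i
    simp only [hSdef, mem_filter, mem_univ, true_and]
    exact congrFun hab i
  have hinner : ∀ p : A × A, p ∈ (univ : Finset A).offDiag →
      (Fintype.piFinset (fun _ : Fin m => S p.1 p.2)).card = s ^ m := by
    rintro ⟨x, y⟩ hp
    rw [Finset.mem_offDiag] at hp
    rw [Fintype.card_piFinset]
    simp [hScard x y hp.2.2]
  have hbound : bad.card ≤ v ^ 2 * s ^ m := by
    calc bad.card ≤ ((univ : Finset A).offDiag.biUnion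
        (fun p => Fintype.piFinset (fun _ : Fin m => S p.1 p.2))).card :=
          Finset.card_le_card hsub
      _ ≤ ∑ p ∈ (univ : Finset A).offDiag,
            (Fintype.piFinset (fun _ : Fin m => S p.1 p.2)).card :=
          Finset.card_biUnion_le
      _ = ∑ p ∈ (univ : Finset A).offDiag, s ^ m := Finset.sum_congr rfl hinner
      _ = (univ : Finset A).offDiag.card * s ^ m := by rw [Finset.sum_const, smul_eq_mul]
      _ ≤ v ^ 2 * s ^ m := by
          apply Nat.mul_le_mul_right
          have h := Finset.offDiag_card (univ : Finset A)
          have hu : (univ : Finset A).card = v := by rw [Finset.card_univ, hv]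
          rw [h, hu]
          calc v * v - v ≤ v * v := Nat.sub_le _ _
            _ = v ^ 2 := (sq v).symm
  have hs : s + 2 * k = v + 2 * l := by omega
  calc ((bad.card : ℝ)) ≤ ((v ^ 2 * s ^ m : ℕ) : ℝ) := by exact_mod_cast hbound
    _ = (v:ℝ)^2 * (s:ℝ)^m := by push_cast; ring
    _ ≤ (v:ℝ)^m / 64 := dsinj_real v k l s m hv2 hkl hs hm
end

section
/- Let q be a prime power with q ≡ 3 (mod 4) and let 𝔽_q be the finite field with q elements. Let D := {x ∈ 𝔽_q : x is a nonzero square} be the set of nonzero quadratic residues. Then D is a (q, (q−1)/2, (q−3)/4)-difference set in the additive group of 𝔽_q: |D| = (q−1)/2, and for every nonzero a ∈ 𝔽_q the number of ordered pairs (x,y) ∈ D×D with x−y = a equals (q−3)/4. -/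
/-!
Multiplication by a nonzero square `c` is an additive automorphism of `𝔽_q` fixing `D`, so the
number `λ(a) = diffCount D a` of pairs in `D × D` with difference `a` satisfies
`λ(c * a) = λ(a)`, and swapping the pair gives `λ(-a) = λ(a)`. As `-1` is not a square when
`q ≡ 3 (mod 4)`, every nonzero `a` is `±c` for some `c ∈ D`, so `λ` is constant on `𝔽_q^×`; the
same fact splits `𝔽_q^×` into `D` and `-D`, so `k = |D| = (q - 1) / 2`. Counting the `k² - k`
pairs of distinct elements of `D` by their difference gives `(q - 1) λ = k (k - 1)`, that is
`λ = (k - 1) / 2 = (q - 3) / 4`.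
-/

open Finset

section DifferenceCount

variable {G : Type*} [AddCommGroup G] [DecidableEq G]

def diffCount (D : Finset G) (a : G) : ℕ := #{p ∈ D ×ˢ D | p.1 - p.2 = a}

lemma diffCount_zero (D : Finset G) : diffCount D 0 = #D := by
  have : {p ∈ D ×ˢ D | p.1 - p.2 = 0} = D.diag := by
    ext ⟨x, y⟩
    simp only [mem_filter, mem_product, mem_diag, sub_eq_zero]
    grind
  rw [diffCount, this, diag_card]

lemma diffCount_neg (D : Finset G) (a : G) : diffCount D (-a) = diffCount D a := by
  refine card_nbij' Prod.swap Prod.swap ?_ ?_ (fun _ _ => rfl) (fun _ _ => rfl) <;>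
  · rintro ⟨x, y⟩
    simp only [coe_filter, mem_product, Prod.swap_prod_mk]
    rintro ⟨⟨hx, hy⟩, h⟩
    exact ⟨⟨hy, hx⟩, by grind⟩

lemma diffCount_addEquiv (D : Finset G) (σ : G ≃+ G) (hσ : ∀ x, σ x ∈ D ↔ x ∈ D)
    (a : G) : diffCount D (σ a) = diffCount D a := by
  symm
  refine card_nbij' (Prod.map σ σ) (Prod.map σ.symm σ.symm) ?_ ?_ ?_ ?_
  · rintro ⟨x, y⟩
    simp [hσ, ← map_sub]
  · rintro ⟨x, y⟩
    simp only [coe_filter, mem_product, Prod.map_apply]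
    rintro ⟨⟨hx, hy⟩, h⟩
    refine ⟨⟨(hσ _).1 (by simpa using hx), (hσ _).1 (by simpa using hy)⟩, ?_⟩
    rw [← map_sub, h, AddEquiv.symm_apply_apply]
  · rintro ⟨x, y⟩ -; simp
  · rintro ⟨x, y⟩ -; simp

lemma sum_diffCount [Fintype G] (D : Finset G) : ∑ a, diffCount D a = #D * #D := by
  rw [← card_product, card_eq_sum_card_fiberwise (t := univ) (f := fun p : G × G => p.1 - p.2)
    (fun _ _ => mem_univ _)]
  rfl

end DifferenceCount

section NonzeroSquares

variable {F : Type*} [Field F] {D : Finset F}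

lemma mul_mem_iff_of_mem (hD : ∀ x, x ∈ D ↔ x ≠ 0 ∧ IsSquare x) {c : F} (hc : c ∈ D)
    (x : F) : c * x ∈ D ↔ x ∈ D := by
  obtain ⟨hc0, hcsq⟩ := (hD c).mp hc
  rw [hD, hD, mul_ne_zero_iff, and_iff_right hc0]
  refine and_congr_right fun hx => ⟨fun h => ?_, hcsq.mul⟩
  simpa [hc0] using h.div hcsq

variable [DecidableEq F]

lemma diffCount_mul_of_mem (hD : ∀ x, x ∈ D ↔ x ≠ 0 ∧ IsSquare x) {c : F} (hc : c ∈ D)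
    (a : F) : diffCount D (c * a) = diffCount D a :=
  diffCount_addEquiv D (DistribMulAction.toAddEquiv₀ F c ((hD c).mp hc).1)
    (mul_mem_iff_of_mem hD hc) a

variable [Fintype F]

lemma isSquare_neg_iff_not_isSquare (hF : Fintype.card F % 4 = 3) {x : F} (hx : x ≠ 0) :
    IsSquare (-x) ↔ ¬IsSquare x := by
  have hneg_one : quadraticChar F (-1) = -1 :=
    quadraticChar_neg_one_iff_not_isSquare.mpr (by simp [FiniteField.isSquare_neg_one_iff, hF])
  rw [← quadraticChar_neg_one_iff_not_isSquare,
    ← quadraticChar_one_iff_isSquare (neg_ne_zero.mpr hx), neg_eq_neg_one_mul, map_mul, hneg_one]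
  constructor <;> intro h <;> linear_combination -h

lemma two_mul_card_nonzeroSquares (hD : ∀ x, x ∈ D ↔ x ≠ 0 ∧ IsSquare x)
    (hF : Fintype.card F % 4 = 3) : 2 * #D = Fintype.card F - 1 := by
  have hdisj : Disjoint D (D.map (Equiv.neg F).toEmbedding) := by
    rw [disjoint_left]
    intro x hxD hxN
    simp only [mem_map_equiv, Equiv.neg_symm, Equiv.neg_apply, hD] at hxD hxN
    exact (isSquare_neg_iff_not_isSquare hF hxD.1).mp hxN.2 hxD.2
  have hsplit : univ.erase 0 = D.disjUnion (D.map (Equiv.neg F).toEmbedding) hdisj := by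
    ext x
    simp only [mem_erase, mem_univ, and_true, mem_disjUnion, mem_map_equiv, Equiv.neg_symm,
      Equiv.neg_apply, hD, neg_ne_zero]
    by_cases hx : x = 0
    · simp [hx]
    · simp [hx, isSquare_neg_iff_not_isSquare hF hx, em]
  rw [← card_univ, ← card_erase_of_mem (mem_univ 0), hsplit, card_disjUnion, card_map, two_mul]

lemma diffCount_eq_diffCount_one (hD : ∀ x, x ∈ D ↔ x ≠ 0 ∧ IsSquare x)
    (hF : Fintype.card F % 4 = 3) {a : F} (ha : a ≠ 0) : diffCount D a = diffCount D 1 := by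
  by_cases hsq : IsSquare a
  · simpa using diffCount_mul_of_mem hD ((hD a).mpr ⟨ha, hsq⟩) 1
  · have hneg : -a ∈ D :=
      (hD _).mpr ⟨neg_ne_zero.mpr ha, (isSquare_neg_iff_not_isSquare hF ha).mpr hsq⟩
    simpa [diffCount_neg] using diffCount_mul_of_mem hD hneg 1

end NonzeroSquares

theorem paley_difference_set_general
    (q : ℕ) (hq4 : q % 4 = 3)
    {F : Type*} [Field F] [Fintype F] [DecidableEq F]
    (hF : Fintype.card F = q)
    (D : Finset F)
    (hD : ∀ x : F, x ∈ D ↔ x ≠ 0 ∧ ∃ y : F, y ≠ 0 ∧ x = y ^ 2) :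
    D.card = (q - 1) / 2 ∧
      ∀ a : F, a ≠ 0 →
        ((D ×ˢ D).filter (fun p => p.1 - p.2 = a)).card = (q - 3) / 4 := by
  have hD' : ∀ x, x ∈ D ↔ x ≠ 0 ∧ IsSquare x := fun x => by
    rw [hD]
    refine and_congr_right fun hx => ⟨fun ⟨y, _, hxy⟩ => ⟨y, hxy.trans (sq y)⟩, ?_⟩
    rintro ⟨y, hxy⟩
    exact ⟨y, right_ne_zero_of_mul (hxy ▸ hx), hxy.trans (sq y).symm⟩
  have hq : Fintype.card F % 4 = 3 := hF ▸ hq4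
  have hcard := two_mul_card_nonzeroSquares hD' hq
  rw [hF] at hcard
  refine ⟨by omega, fun a ha => ?_⟩
  have hsum : #D * #D = #D + (q - 1) * diffCount D 1 := by
    rw [← sum_diffCount, ← add_sum_erase _ _ (mem_univ 0), diffCount_zero,
      sum_congr rfl fun b hb => diffCount_eq_diffCount_one hD' hq (ne_of_mem_erase hb),
      sum_const, card_erase_of_mem (mem_univ 0), card_univ, hF, smul_eq_mul]
  have hlam : #D = 2 * diffCount D 1 + 1 := by
    refine Nat.eq_of_mul_eq_mul_left (show 0 < #D by omega) ?_
    rw [← hcard] at hsum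
    linarith
  show diffCount D a = _
  rw [diffCount_eq_diffCount_one hD' hq ha]
  omega

/-- Paley difference sets: for a finite field `F` of order `q ≡ 3 (mod 4)`, the set
`D` of nonzero squares is a `(q, (q−1)/2, (q−3)/4)`-difference set in the additive
group of `F`. -/
theorem paley_difference_set
    (q : ℕ) (hq : ∃ p r : ℕ, p.Prime ∧ 0 < r ∧ q = p ^ r) (hq4 : q % 4 = 3)
    {F : Type*} [Field F] [Fintype F] [DecidableEq F]
    (hF : Fintype.card F = q)
    (D : Finset F)
    (hD : ∀ x : F, x ∈ D ↔ x ≠ 0 ∧ ∃ y : F, y ≠ 0 ∧ x = y ^ 2) :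
    D.card = (q - 1) / 2 ∧
      ∀ a : F, a ≠ 0 →
        ((D ×ˢ D).filter (fun p => p.1 - p.2 = a)).card = (q - 3) / 4 :=
  paley_difference_set_general q hq4 hF D hD
end

section
/- Let n ≥ 1 and let f : 𝔽₂^{2n} → 𝔽₂ be a bent function, i.e., |∑_{x ∈ 𝔽₂^{2n}} (−1)^{f(x) + w·x}| = 2^n for every w ∈ 𝔽₂^{2n}, where w·x denotes the standard inner product over 𝔽₂. Suppose in addition that |f⁻¹(1)| = 2^{2n−1} − 2^{n−1}. Then D := f⁻¹(1) is a (2^{2n}, 2^{2n−1}−2^{n−1}, 2^{2n−2}−2^{n−1})-difference set in the additive group 𝔽₂^{2n}: for every nonzero a ∈ 𝔽₂^{2n}, the number of ordered pairs (x,y) ∈ D×D with x+y = a equals 2^{2n−2}−2^{n−1}. -/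
/-!
Put `s = (-1)^f = 1 - 2·𝟙_D`. Bentness says that every Walsh coefficient of `s` has square
`2^{2n}`, so by Fourier inversion the self-convolution `∑ₓ s(x) s(a - x)` is a multiple of
`∑_w (-1)^{w·a}`, which vanishes for `a ≠ 0`. Expanding `s = 1 - 2·𝟙_D` turns this into
`4·#{x ∈ D | a - x ∈ D} = 4|D| - 2^{2n}`, and the pairs in `D × D` with sum `a` are exactly the
`(x, a - x)` counted there.
-/

open Finset

def signAddChar (R : Type*) [Ring R] : AddChar (ZMod 2) R where
  toFun b := (-1) ^ b.val
  map_zero_eq_one' := by simp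
  map_add_eq_mul' a b := by rw [ZMod.val_add, ← neg_one_pow_eq_pow_mod_two, pow_add]

lemma signAddChar_apply {R : Type*} [Ring R] (b : ZMod 2) :
    signAddChar R b = if b = 1 then -1 else 1 := by
  obtain rfl | rfl : b = 0 ∨ b = 1 := by decide +revert
  all_goals simp [signAddChar, ZMod.val_one]

section Walsh

variable {ι R : Type*} [Fintype ι] [CommRing R]

def walshChar (w : ι → ZMod 2) : AddChar (ι → ZMod 2) R where
  toFun x := signAddChar R (w ⬝ᵥ x)
  map_zero_eq_one' := by simp
  map_add_eq_mul' x y := by rw [dotProduct_add, AddChar.map_add_eq_mul]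

lemma walshChar_apply (w x : ι → ZMod 2) : walshChar w x = signAddChar R (w ⬝ᵥ x) := rfl

lemma walshChar_comm (w x : ι → ZMod 2) : (walshChar w x : R) = walshChar x w := by
  rw [walshChar_apply, walshChar_apply, dotProduct_comm]

variable [DecidableEq ι]

lemma walshChar_eq_zero_iff [CharZero R] {w : ι → ZMod 2} :
    walshChar w = (0 : AddChar (ι → ZMod 2) R) ↔ w = 0 := by
  refine ⟨fun h => ?_, fun h => by ext x; simp [h, walshChar_apply]⟩
  by_contra hw
  obtain ⟨i, hi⟩ := Function.ne_iff.1 hw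
  have hwi : w i = 1 := (by decide : ∀ b : ZMod 2, b ≠ 0 → b = 1) _ hi
  have hsingle := DFunLike.congr_fun h (Pi.single i 1)
  rw [walshChar_apply, dotProduct_single, hwi, mul_one, signAddChar_apply, if_pos rfl,
    AddChar.zero_apply] at hsingle
  norm_num at hsingle

lemma sum_walshChar [IsDomain R] [CharZero R] (a : ι → ZMod 2) :
    ∑ w, (walshChar w a : R) = if a = 0 then 2 ^ Fintype.card ι else 0 := by
  simp_rw [walshChar_comm _ a]
  simp [AddChar.sum_eq_ite, walshChar_eq_zero_iff]

def walsh (F : (ι → ZMod 2) → R) (w : ι → ZMod 2) : R := ∑ x, F x * walshChar w x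

lemma sum_sq_walsh_mul_walshChar [IsDomain R] [CharZero R] (F : (ι → ZMod 2) → R)
    (a : ι → ZMod 2) :
    ∑ w, walsh F w ^ 2 * walshChar w a = 2 ^ Fintype.card ι * ∑ x, F x * F (a - x) := by
  have hroot : ∀ x y : ι → ZMod 2, x + y + a = 0 ↔ y = a - x := by
    intro x y
    rw [eq_sub_iff_add_eq, add_eq_zero_iff_eq_neg, ZModModule.neg_eq_self, add_comm y]
  calc ∑ w, walsh F w ^ 2 * walshChar w a
      = ∑ x, ∑ y, F x * F y * ∑ w, (walshChar w (x + y + a) : R) := by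
        simp_rw [walsh, sq, sum_mul_sum, sum_mul, mul_sum, AddChar.map_add_eq_mul]
        rw [sum_comm]
        refine sum_congr rfl fun x _ => ?_
        rw [sum_comm]
        refine sum_congr rfl fun y _ => sum_congr rfl fun w _ => by ring
    _ = 2 ^ Fintype.card ι * ∑ x, F x * F (a - x) := by
        simp_rw [sum_walshChar, hroot, mul_ite, mul_zero, sum_ite_eq', mem_univ, if_true, mul_sum]
        exact sum_congr rfl fun x _ => by ring

lemma sum_mul_apply_sub_eq_zero_of_sq_walsh_const [IsDomain R] [CharZero R]
    {F : (ι → ZMod 2) → R} {c : R} (hF : ∀ w, walsh F w ^ 2 = c) {a : ι → ZMod 2}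
    (ha : a ≠ 0) : ∑ x, F x * F (a - x) = 0 := by
  have h := sum_sq_walsh_mul_walshChar F a
  simp_rw [hF, ← mul_sum, sum_walshChar, if_neg ha, mul_zero] at h
  exact (mul_eq_zero.1 h.symm).resolve_left (pow_ne_zero _ two_ne_zero)

end Walsh

section Counting

variable {G : Type*} [AddCommGroup G] [DecidableEq G]

lemma card_filter_add_eq (D : Finset G) (a : G) :
    #{p ∈ D ×ˢ D | p.1 + p.2 = a} = #{x ∈ D | a - x ∈ D} := by
  refine card_nbij' Prod.fst (fun x => (x, a - x)) ?_ ?_ ?_ fun _ _ => rfl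
  · rintro ⟨x, y⟩ h
    simp only [coe_filter, mem_product, Set.mem_ofPred_eq] at h
    obtain ⟨⟨hx, hy⟩, rfl⟩ := h
    simp_all
  · intro x h
    simp_all
  · rintro ⟨x, y⟩ h
    simp only [coe_filter, mem_product, Set.mem_ofPred_eq] at h
    obtain ⟨-, rfl⟩ := h
    simp

lemma sum_sign_mul_sign_sub [Fintype G] {R : Type*} [CommRing R] (D : Finset G) (a : G) :
    ∑ x, (if x ∈ D then -1 else 1 : R) * (if a - x ∈ D then -1 else 1)
      = Fintype.card G - 4 * #D + 4 * #{x ∈ D | a - x ∈ D} := by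
  have hterm : ∀ x, (if x ∈ D then -1 else 1 : R) * (if a - x ∈ D then -1 else 1)
      = 1 - 2 * (if x ∈ D then 1 else 0) - 2 * (if a - x ∈ D then 1 else 0)
        + 4 * (if x ∈ D ∧ a - x ∈ D then 1 else 0) := by
    intro x
    by_cases hx : x ∈ D <;> by_cases hax : a - x ∈ D <;> simp [hx, hax] <;> norm_num
  have hshift : ∑ x, (if a - x ∈ D then 1 else 0 : R) = #D :=
    ((Equiv.subLeft a).sum_comp (fun x => if x ∈ D then (1 : R) else 0)).trans (by simp)
  simp only [hterm, sum_add_distrib, sum_sub_distrib, ← mul_sum, hshift, sum_boole]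
  rw [show ({x | x ∈ D ∧ a - x ∈ D} : Finset G) = {x ∈ D | a - x ∈ D} by ext; simp]
  simp only [filter_univ_mem, sum_const, card_univ, nsmul_eq_mul, mul_one]
  ring

end Counting

lemma hadamard_lambda_of_four_mul_add_eq {n N : ℕ}
    (h : 4 * N + 2 ^ (2 * n) = 4 * (2 ^ (2 * n - 1) - 2 ^ (n - 1))) :
    N = 2 ^ (2 * n - 2) - 2 ^ (n - 1) := by
  cases n with
  | zero => simp at h
  | succ k =>
    have hk : 2 ^ k ≤ 2 ^ (2 * k) := Nat.pow_le_pow_right two_pos (by omega)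
    rw [show 2 * (k + 1) - 1 = 2 * k + 1 by omega, show 2 * (k + 1) = 2 * k + 2 by omega,
      pow_succ, pow_succ] at h
    rw [show 2 * (k + 1) - 2 = 2 * k by omega, Nat.add_sub_cancel]
    simp only [Nat.add_sub_cancel] at h
    omega

theorem bent_function_difference_set_general
    (n : ℕ)
    (f : (Fin (2 * n) → ZMod 2) → ZMod 2)
    (hbent : ∀ w : Fin (2 * n) → ZMod 2,
      |∑ x : Fin (2 * n) → ZMod 2, (-1 : ℝ) ^ (f x + ∑ i, w i * x i).val|
        = 2 ^ n)
    (D : Finset (Fin (2 * n) → ZMod 2))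
    (hD : ∀ x, x ∈ D ↔ f x = 1)
    (hcard : D.card = 2 ^ (2 * n - 1) - 2 ^ (n - 1)) :
    ∀ a : Fin (2 * n) → ZMod 2, a ≠ 0 →
      ((D ×ˢ D).filter (fun p => p.1 + p.2 = a)).card
        = 2 ^ (2 * n - 2) - 2 ^ (n - 1) := by
  intro a ha
  set s : (Fin (2 * n) → ZMod 2) → ℝ := fun x => signAddChar ℝ (f x)
  have hs : ∀ x, s x = if x ∈ D then -1 else 1 := fun x => by
    simp only [s, signAddChar_apply, hD]
  have hflat : ∀ w, walsh s w ^ 2 = (2 ^ n) ^ 2 := fun w => by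
    rw [← sq_abs, ← hbent w, walsh]
    simp only [s, walshChar_apply, ← AddChar.map_add_eq_mul]
    rfl
  have hconv := sum_mul_apply_sub_eq_zero_of_sq_walsh_const hflat ha
  simp only [hs, sum_sign_mul_sign_sub, Fintype.card_fun, ZMod.card, Fintype.card_fin,
    Nat.cast_pow, Nat.cast_ofNat] at hconv
  rw [card_filter_add_eq]
  apply hadamard_lambda_of_four_mul_add_eq
  rw [← hcard]
  exact_mod_cast (by linarith : (4 * #{x ∈ D | a - x ∈ D} + 2 ^ (2 * n) : ℝ) = 4 * #D)

/-- Hadamard difference sets from bent functions: if `f : 𝔽₂^{2n} → 𝔽₂` is bent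
(all Fourier coefficients have absolute value `2^n`) and `D = f⁻¹(1)` has
`2^{2n−1} − 2^{n−1}` elements, then `D` is a
`(2^{2n}, 2^{2n−1}−2^{n−1}, 2^{2n−2}−2^{n−1})`-difference set in `𝔽₂^{2n}`. -/
theorem bent_function_difference_set
    (n : ℕ) (hn : 1 ≤ n)
    (f : (Fin (2 * n) → ZMod 2) → ZMod 2)
    (hbent : ∀ w : Fin (2 * n) → ZMod 2,
      |∑ x : Fin (2 * n) → ZMod 2, (-1 : ℝ) ^ (f x + ∑ i, w i * x i).val|
        = 2 ^ n)
    (D : Finset (Fin (2 * n) → ZMod 2))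
    (hD : ∀ x, x ∈ D ↔ f x = 1)
    (hcard : D.card = 2 ^ (2 * n - 1) - 2 ^ (n - 1)) :
    ∀ a : Fin (2 * n) → ZMod 2, a ≠ 0 →
      ((D ×ˢ D).filter (fun p => p.1 + p.2 = a)).card
        = 2 ^ (2 * n - 2) - 2 ^ (n - 1) :=
  bent_function_difference_set_general n f hbent D hD hcard
end

section
/- Let q be a prime power, let d ≥ 2, let K := 𝔽_{q^{d+1}} and regard 𝔽_q as a subfield of K; let tr : K → 𝔽_q be the field trace. Let A := Kˣ/𝔽_qˣ (a cyclic group of order N = (q^{d+1}−1)/(q−1), written multiplicatively) and let D ⊆ A be the image of {x ∈ Kˣ : tr(x) = 0} under the canonical projection Kˣ → A (this is well defined since tr(cx) = c·tr(x) for c ∈ 𝔽_qˣ, so having trace zero is constant on cosets). Then |D| = (q^d−1)/(q−1), and D is a Singer difference set: for every non-identity g ∈ A, the number of ordered pairs (X,Y) ∈ D×D with X·Y⁻¹ = g equals (q^{d−1}−1)/(q−1). -/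
/-!
View `Kˣ/Fˣ` as the projective space of the `F`-vector space `K`: an `m`-dimensional subspace
contributes `(q^m - 1)/(q - 1)` points. `D` is the set of points of the trace hyperplane, which is
the orthogonal of `F ∙ 1` for the nondegenerate trace form. For `g = [a] ≠ 1` the pairs
`(X, Y) ∈ D × D` with `X Y⁻¹ = g` correspond to the points `Y ∈ D ∩ g⁻¹ D`, i.e. to the points of
the orthogonal of `span {1, a}`; as `a ∉ F` this span is a plane, so its orthogonal has
dimension `d - 1`.
-/

open scoped Classical

open Finset Module LinearMap.BilinForm

theorem Set.ncard_setOf_units_coe_mem {G₀ : Type*} [GroupWithZero G₀] {S : Set G₀}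
    (h0 : (0 : G₀) ∈ S) : {u : G₀ˣ | (u : G₀) ∈ S}.ncard = S.ncard - 1 := by
  have himage : Units.val '' {u : G₀ˣ | (u : G₀) ∈ S} = S \ {0} := by
    ext a
    constructor
    · rintro ⟨u, hu, rfl⟩
      exact ⟨hu, u.ne_zero⟩
    · rintro ⟨ha, ha0⟩
      exact ⟨Units.mk0 a ha0, ha, rfl⟩
  rw [← Set.ncard_image_of_injective _ Units.val_injective, himage,
    Set.ncard_sdiff_singleton_of_mem h0]

theorem Finset.card_filter_mul_inv_eq {G : Type*} [Group G] [DecidableEq G] (D : Finset G)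
    (g : G) :
    #((D ×ˢ D).filter (fun p => p.1 * p.2⁻¹ = g)) = #(D.filter (fun y => g * y ∈ D)) := by
  refine Finset.card_nbij' Prod.snd (fun y => (g * y, y)) ?_ ?_ ?_ ?_
  · rintro ⟨x, y⟩ h
    simp only [Finset.coe_filter, Finset.mem_product, Set.mem_ofPred_eq] at h ⊢
    obtain ⟨⟨hx, hy⟩, rfl⟩ := h
    simpa using And.intro hy hx
  · intro y h
    simp only [Finset.coe_filter, Finset.mem_product, Set.mem_ofPred_eq] at h ⊢
    simp [h.1, h.2]
  · rintro ⟨x, y⟩ h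
    simp only [Finset.coe_filter, Finset.mem_product, Set.mem_ofPred_eq] at h
    simp [← h.2]
  · intro y _
    rfl

theorem LinearMap.BilinForm.mem_orthogonal_span_iff {R M : Type*} [CommRing R]
    [AddCommGroup M] [Module R M] {B : LinearMap.BilinForm R M} {s : Set M} {m : M} :
    m ∈ B.orthogonal (Submodule.span R s) ↔ ∀ n ∈ s, B n m = 0 :=
  Submodule.span_le (p := LinearMap.ker (B.flip m))

section ScalarUnits

variable {F K : Type*} [Field F] [Field K] [Algebra F K]

variable (F K) in
def scalarUnits : Subgroup Kˣ := (Units.map ((algebraMap F K : F →+* K) : F →* K)).range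

theorem natCard_scalarUnits [Fintype F] : Nat.card (scalarUnits F K) = Fintype.card F - 1 := by
  rw [← Fintype.card_units, ← Nat.card_eq_fintype_card]
  exact (Nat.card_congr
    (MonoidHom.ofInjective (Units.map_injective (algebraMap F K).injective)).toEquiv).symm

theorem coe_mem_iff_of_mk_eq (W : Submodule F K) {x y : Kˣ}
    (h : (x : Kˣ ⧸ scalarUnits F K) = y) : (x : K) ∈ W ↔ (y : K) ∈ W := by
  obtain ⟨c, hc⟩ := QuotientGroup.eq.mp h
  have hy : (y : K) = (c : F) • (x : K) := by
    rw [Algebra.smul_def, mul_comm, show algebraMap F K c = ((x⁻¹ * y : Kˣ) : K) from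
      congrArg Units.val hc, ← Units.val_mul, mul_inv_cancel_left]
  rw [hy, W.smul_mem_iff c.ne_zero]

theorem coe_notMem_range_algebraMap_of_mk_ne_one {a : Kˣ}
    (ha : (a : Kˣ ⧸ scalarUnits F K) ≠ 1) : (a : K) ∉ Set.range (algebraMap F K) := by
  rintro ⟨c, hc⟩
  refine ha ((QuotientGroup.eq_one_iff _).mpr ⟨Units.mk0 c ?_, Units.ext hc⟩)
  rintro rfl
  exact a.ne_zero (by rw [← hc, map_zero])

theorem finrank_span_one_pair_eq_two {a : K} (ha : a ∉ Set.range (algebraMap F K)) :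
    finrank F (Submodule.span F {1, a}) = 2 := by
  have hli : LinearIndependent F ![1, a] := by
    refine LinearIndependent.pair_iff.mpr fun s t hst => ?_
    by_cases ht : t = 0
    · subst ht
      simpa using hst
    · refine absurd ⟨-s / t, ?_⟩ ha
      rw [Algebra.smul_def, mul_one, add_eq_zero_iff_eq_neg] at hst
      rw [map_div₀, map_neg, hst, Algebra.smul_def, neg_neg,
        mul_div_cancel_left₀ _ ((map_ne_zero _).mpr ht)]
  have := finrank_span_eq_card hli
  rwa [Matrix.range_cons_cons_empty, Fintype.card_fin] at this

def projPoints (W : Submodule F K) : Set (Kˣ ⧸ scalarUnits F K) :=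
  (↑) '' {x : Kˣ | (x : K) ∈ W}

theorem mk_mem_projPoints_iff (W : Submodule F K) (x : Kˣ) :
    (x : Kˣ ⧸ scalarUnits F K) ∈ projPoints W ↔ (x : K) ∈ W :=
  ⟨fun ⟨_, hy, hyx⟩ => (coe_mem_iff_of_mk_eq W hyx).mp hy, fun hx => ⟨x, hx, rfl⟩⟩

theorem card_sub_one_mul_ncard_projPoints [Fintype F] [Finite K] (W : Submodule F K) :
    (Fintype.card F - 1) * (projPoints W).ncard = Fintype.card F ^ finrank F W - 1 := by
  have hpre : (↑) ⁻¹' projPoints W = {x : Kˣ | (x : K) ∈ W} :=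
    Set.ext (mk_mem_projPoints_iff W)
  calc (Fintype.card F - 1) * (projPoints W).ncard
      = {x : Kˣ | (x : K) ∈ W}.ncard := by
        rw [← hpre, ← natCard_scalarUnits (K := K), ← Nat.card_coe_set_eq,
          ← Nat.card_coe_set_eq, QuotientGroup.card_preimage_mk]
    _ = (W : Set K).ncard - 1 := Set.ncard_setOf_units_coe_mem W.zero_mem
    _ = Fintype.card F ^ finrank F W - 1 := by
        rw [← Nat.card_coe_set_eq, SetLike.coe_sort_coe, Module.natCard_eq_pow_finrank (K := F),
          Nat.card_eq_fintype_card]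

theorem coe_filter_mul_mem_eq_projPoints_inf_comap {D : Finset (Kˣ ⧸ scalarUnits F K)}
    {W : Submodule F K} (hD : (D : Set (Kˣ ⧸ scalarUnits F K)) = projPoints W) (a : Kˣ) :
    (D.filter (fun Y => (a : Kˣ ⧸ scalarUnits F K) * Y ∈ D) : Set (Kˣ ⧸ scalarUnits F K)) =
      projPoints (W ⊓ W.comap (LinearMap.mulLeft F (a : K))) := by
  ext X
  obtain ⟨x, rfl⟩ := QuotientGroup.mk_surjective X
  simp only [Finset.coe_filter, Set.mem_ofPred_eq, ← Finset.mem_coe, hD, ← QuotientGroup.mk_mul,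
    mk_mem_projPoints_iff, Submodule.mem_inf, Submodule.mem_comap, LinearMap.mulLeft_apply,
    Units.val_mul]

theorem mem_traceForm_orthogonal_one_iff {y : K} :
    y ∈ (Algebra.traceForm F K).orthogonal (F ∙ 1) ↔ Algebra.trace F K y = 0 := by
  simp only [mem_orthogonal_span_iff, Set.mem_singleton_iff, forall_eq,
    Algebra.traceForm_apply, one_mul]

theorem traceForm_orthogonal_one_inf_comap_mulLeft (a : K) :
    (Algebra.traceForm F K).orthogonal (F ∙ 1) ⊓
        ((Algebra.traceForm F K).orthogonal (F ∙ 1)).comap (LinearMap.mulLeft F a) =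
      (Algebra.traceForm F K).orthogonal (Submodule.span F {1, a}) := by
  ext y
  simp only [Submodule.mem_inf, Submodule.mem_comap, mem_orthogonal_span_iff,
    Set.mem_insert_iff, Set.mem_singleton_iff, forall_eq_or_imp, forall_eq,
    Algebra.traceForm_apply, LinearMap.mulLeft_apply, one_mul]

end ScalarUnits

theorem singer_difference_set_general
    (q d : ℕ)
    {F K : Type*} [Field F] [Field K] [Algebra F K] [Fintype F] [Fintype K]
    (hF : Fintype.card F = q) (hK : Fintype.card K = q ^ (d + 1))
    (H : Subgroup Kˣ)
    (hH : H = (Units.map ((algebraMap F K : F →+* K) : F →* K)).range)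
    (D : Finset (Kˣ ⧸ H))
    (hD : ∀ X : Kˣ ⧸ H, X ∈ D ↔
      ∃ x : Kˣ, Algebra.trace F K (x : K) = 0 ∧ (QuotientGroup.mk x : Kˣ ⧸ H) = X) :
    D.card = (q ^ d - 1) / (q - 1) ∧
      ∀ g : Kˣ ⧸ H, g ≠ 1 →
        ((D ×ˢ D).filter (fun p => p.1 * p.2⁻¹ = g)).card
          = (q ^ (d - 1) - 1) / (q - 1) := by
  obtain rfl : H = scalarUnits F K := hH
  subst hF
  have hrank : finrank F K = d + 1 :=
    Nat.pow_right_injective Fintype.one_lt_card (Module.card_eq_pow_finrank.symm.trans hK)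
  have hcount (U : Submodule F K) :
      (Fintype.card F - 1) * (projPoints ((Algebra.traceForm F K).orthogonal U)).ncard =
        Fintype.card F ^ (d + 1 - finrank F U) - 1 := by
    rw [card_sub_one_mul_ncard_projPoints, finrank_orthogonal (traceForm_nondegenerate F K),
      hrank]
  have hq : Fintype.card F - 1 ≠ 0 := Nat.sub_ne_zero_of_lt Fintype.one_lt_card
  have hD₀ : (D : Set (Kˣ ⧸ scalarUnits F K)) =
      projPoints ((Algebra.traceForm F K).orthogonal (F ∙ 1)) := by
    ext X
    rw [Finset.mem_coe, hD]
    simp only [projPoints, Set.mem_image, Set.mem_ofPred_eq, mem_traceForm_orthogonal_one_iff]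
  refine ⟨?_, fun g hg => ?_⟩
  · rw [← Set.ncard_coe_finset, hD₀]
    refine Nat.eq_div_of_mul_eq_right hq ?_
    simpa [finrank_span_singleton] using hcount (F ∙ 1)
  · obtain ⟨a, rfl⟩ := QuotientGroup.mk_surjective g
    refine (Finset.card_filter_mul_inv_eq D _).trans ?_
    rw [← Set.ncard_coe_finset, coe_filter_mul_mem_eq_projPoints_inf_comap hD₀,
      traceForm_orthogonal_one_inf_comap_mulLeft]
    refine Nat.eq_div_of_mul_eq_right hq ?_
    simpa [finrank_span_one_pair_eq_two (coe_notMem_range_algebraMap_of_mk_ne_one hg)] using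
      hcount (Submodule.span F {1, (a : K)})

/-- Singer difference sets: let `K = 𝔽_{q^{d+1}} ⊇ F = 𝔽_q`, let
`A = Kˣ/Fˣ` and let `D ⊆ A` be the image of the trace-zero hyperplane
`{x ∈ Kˣ : tr_{K/F}(x) = 0}`. Then `|D| = (q^d−1)/(q−1)` and for every
non-identity `g ∈ A` the number of ordered pairs `(X,Y) ∈ D×D` with
`X·Y⁻¹ = g` equals `(q^{d−1}−1)/(q−1)`. -/
theorem singer_difference_set
    (q d : ℕ) (hq : ∃ p r : ℕ, p.Prime ∧ 0 < r ∧ q = p ^ r) (hd : 2 ≤ d)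
    {F K : Type*} [Field F] [Field K] [Algebra F K] [Fintype F] [Fintype K]
    (hF : Fintype.card F = q) (hK : Fintype.card K = q ^ (d + 1))
    (H : Subgroup Kˣ)
    (hH : H = (Units.map ((algebraMap F K : F →+* K) : F →* K)).range)
    (D : Finset (Kˣ ⧸ H))
    (hD : ∀ X : Kˣ ⧸ H, X ∈ D ↔
      ∃ x : Kˣ, Algebra.trace F K (x : K) = 0 ∧ (QuotientGroup.mk x : Kˣ ⧸ H) = X) :
    D.card = (q ^ d - 1) / (q - 1) ∧
      ∀ g : Kˣ ⧸ H, g ≠ 1 →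
        ((D ×ˢ D).filter (fun p => p.1 * p.2⁻¹ = g)).card
          = (q ^ (d - 1) - 1) / (q - 1) :=
  singer_difference_set_general q d hF hK H hH D hD
end

section
/- Let n ≥ 3, let F := 𝔽_{2^n}, and let tr : F → 𝔽₂ be the absolute trace map tr(x) = x + x² + x⁴ + … + x^{2^{n−1}}. Let D := {x ∈ Fˣ : tr(x) = 0}. Then D is a (2^n−1, 2^{n−1}−1, 2^{n−2}−1)-difference set in the (cyclic) multiplicative group Fˣ: |D| = 2^{n−1}−1, and for every g ∈ Fˣ with g ≠ 1, the number of ordered pairs (x,y) ∈ D×D with x·y⁻¹ = g equals 2^{n−2}−1. -/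
private lemma shift_card_aux {F : Type*} [AddCommGroup F] [Fintype F] [DecidableEq F]
    (p q : F → Prop) [DecidablePred p] [DecidablePred q] (c : F)
    (hcc : ∀ x : F, x + c + c = x)
    (h1 : ∀ x, p x → q (x + c)) (h2 : ∀ x, q x → p (x + c)) :
    (Finset.univ.filter p).card = (Finset.univ.filter q).card := by
  refine Finset.card_bij' (fun x _ => x + c) (fun x _ => x + c) ?_ ?_ ?_ ?_
  · intro a ha
    rw [Finset.mem_filter] at ha ⊢
    exact ⟨Finset.mem_univ _, h1 a ha.2⟩
  · intro a ha
    rw [Finset.mem_filter] at ha ⊢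
    exact ⟨Finset.mem_univ _, h2 a ha.2⟩
  · intro a _; exact hcc a
  · intro a _; exact hcc a

/-- Singer difference sets for `q = 2`: in `F = 𝔽_{2^n}` (`n ≥ 3`), the set
`D = {x ∈ Fˣ : tr(x) = 0}`, where `tr(x) = ∑_{i=0}^{n−1} x^{2^i}` is the absolute
trace, is a `(2^n−1, 2^{n−1}−1, 2^{n−2}−1)`-difference set in the multiplicative
group `Fˣ`. -/
theorem singer_difference_set_char_two
    (n : ℕ) (hn : 3 ≤ n)
    {F : Type*} [Field F] [Fintype F] [DecidableEq F]
    (hF : Fintype.card F = 2 ^ n)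
    (D : Finset Fˣ)
    (hD : ∀ x : Fˣ, x ∈ D ↔ ∑ i ∈ Finset.range n, (x : F) ^ (2 ^ i) = 0) :
    D.card = 2 ^ (n - 1) - 1 ∧
      ∀ g : Fˣ, g ≠ 1 →
        ((D ×ˢ D).filter (fun p => p.1 * p.2⁻¹ = g)).card = 2 ^ (n - 2) - 1 := by
  classical
  haveI : Fact (Nat.Prime 2) := ⟨Nat.prime_two⟩
  have hchar : ringChar F = 2 := by
    rw [FiniteField.even_card_iff_char_two, hF,
      show n = (n - 1) + 1 by omega, pow_succ]
    simp [Nat.mul_mod]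
  haveI hC : CharP F 2 := ringChar.of_eq hchar
  set T : F → F := fun x => ∑ i ∈ Finset.range n, x ^ 2 ^ i with hTdef
  have hDT : ∀ x : Fˣ, x ∈ D ↔ T (x : F) = 0 := fun x => hD x
  have Tadd : ∀ x y : F, T (x + y) = T x + T y := by
    intro x y
    simp only [hTdef, ← Finset.sum_add_distrib]
    exact Finset.sum_congr rfl fun i _ => add_pow_char_pow x y 2 i
  have hpow : ∀ x : F, x ^ 2 ^ n = x := fun x => by
    rw [← hF]; exact FiniteField.pow_card x
  have Tzero : T 0 = 0 :=
    Finset.sum_eq_zero fun i _ => zero_pow (by positivity)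
  have Tval : ∀ x : F, T x = 0 ∨ T x = 1 := by
    intro x
    have hsq : T x ^ 2 = T x := by
      have h1 : T x ^ 2 = ∑ i ∈ Finset.range n, x ^ 2 ^ (i + 1) := by
        rw [hTdef]
        rw [sum_pow_char]
        exact Finset.sum_congr rfl fun i _ => by
          rw [← pow_mul, ← pow_succ]
      rw [h1]
      have e1 := Finset.sum_range_succ (fun i => x ^ 2 ^ i) n
      have e2 := Finset.sum_range_succ' (fun i => x ^ 2 ^ i) n
      simp only [hpow x, pow_zero, pow_one] at e1 e2
      have h3 : (∑ i ∈ Finset.range n, x ^ 2 ^ (i + 1)) + x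
          = (∑ i ∈ Finset.range n, x ^ 2 ^ i) + x := e2.symm.trans e1
      exact add_right_cancel h3
    have hfac : T x * (T x - 1) = 0 := by
      rw [mul_sub, mul_one, ← sq, hsq, sub_self]
    rcases mul_eq_zero.mp hfac with h | h
    · exact Or.inl h
    · exact Or.inr (sub_eq_zero.mp h)
  have Tone : ∃ e : F, T e = 1 := by
    by_contra hcon
    push_neg at hcon
    have hall : ∀ x : F, T x = 0 := fun x => (Tval x).resolve_right (hcon x)
    set P : Polynomial F := ∑ i ∈ Finset.range n, Polynomial.X ^ 2 ^ i with hP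
    have heval : ∀ x : F, P.eval x = 0 := by
      intro x
      rw [hP]
      simpa [Polynomial.eval_finset_sum] using hall x
    have hdeg : P.natDegree < Fintype.card F := by
      have h1 : P.natDegree ≤ 2 ^ (n - 1) := by
        apply Polynomial.natDegree_sum_le_of_forall_le
        intro i hi
        rw [Polynomial.natDegree_X_pow]
        have := Finset.mem_range.mp hi
        exact Nat.pow_le_pow_right (by norm_num) (by omega)
      calc P.natDegree ≤ 2 ^ (n - 1) := h1
        _ < 2 ^ n := Nat.pow_lt_pow_right (by norm_num) (by omega)
        _ = Fintype.card F := hF.symm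
    have hP0 : P = 0 :=
      Polynomial.eq_zero_of_natDegree_lt_card_of_eval_eq_zero P
        Function.injective_id (fun x => heval x) hdeg
    have hco : P.coeff 1 = 1 := by
      rw [hP, Polynomial.finset_sum_coeff]
      have : ∀ i ∈ Finset.range n, (Polynomial.X ^ 2 ^ i : Polynomial F).coeff 1
          = if i = 0 then 1 else 0 := by
        intro i _
        rw [Polynomial.coeff_X_pow]
        rcases Nat.eq_zero_or_pos i with h | h
        · simp [h]
        · have h2 : 2 ^ i ≠ 1 := by
            have : 2 ^ 1 ≤ 2 ^ i := Nat.pow_le_pow_right (by norm_num) h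
            omega
          rw [if_neg (fun hh => h2 hh.symm), if_neg (by omega)]
      rw [Finset.sum_congr rfl this, Finset.sum_ite_eq' (Finset.range n) 0]
      simp [show 0 < n by omega]
    rw [hP0] at hco
    simp at hco
  obtain ⟨e, he⟩ := Tone
  have hTcard : (Finset.univ.filter (fun x : F => T x = 0)).card = 2 ^ (n - 1) := by
    have hself : ∀ x : F, x + e + e = x := fun x => by
      rw [add_assoc, CharTwo.add_self_eq_zero, add_zero]
    have h01 : (Finset.univ.filter (fun x : F => T x = 0)).card
        = (Finset.univ.filter (fun x : F => T x = 1)).card := by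
      apply shift_card_aux _ _ e hself
      · intro x hx; rw [Tadd, hx, he, zero_add]
      · intro x hx; rw [Tadd, hx, he, CharTwo.add_self_eq_zero]
    have hsplit := Finset.card_filter_add_card_filter_not
      (s := (Finset.univ : Finset F)) (fun x : F => T x = 0)
    have hneg : (Finset.univ.filter (fun x : F => ¬ T x = 0))
        = Finset.univ.filter (fun x : F => T x = 1) := by
      apply Finset.filter_congr
      intro x _
      constructor
      · exact fun h => (Tval x).resolve_left h
      · intro h h0; rw [h0] at h; exact one_ne_zero h.symm
    rw [hneg, Finset.card_univ, hF, ← h01] at hsplit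
    have h2n : 2 ^ n = 2 ^ (n - 1) * 2 := by
      rw [← pow_succ]; congr 1; omega
    omega
  constructor
  · have hbij : D.card
        = ((Finset.univ.filter (fun x : F => T x = 0)).erase 0).card := by
      apply Finset.card_bij (fun (x : Fˣ) _ => (x : F))
      · intro a ha
        rw [Finset.mem_erase]
        exact ⟨a.ne_zero, Finset.mem_filter.mpr ⟨Finset.mem_univ _, (hDT a).mp ha⟩⟩
      · intro a _ b _ h
        exact Units.ext h
      · intro b hb
        rw [Finset.mem_erase, Finset.mem_filter] at hb
        exact ⟨Units.mk0 b hb.1, (hDT _).mpr hb.2.2, rfl⟩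
    have h0mem : (0 : F) ∈ Finset.univ.filter (fun x : F => T x = 0) :=
      Finset.mem_filter.mpr ⟨Finset.mem_univ _, Tzero⟩
    rw [hbij, Finset.card_erase_of_mem h0mem, hTcard]
  · intro g hg
    have hg1 : (g : F) ≠ 1 := fun h => hg (Units.ext h)
    have hgne : (1 : F) + (g : F) ≠ 0 := by
      intro h
      apply hg1
      have h2 : (1 : F) + ((1 : F) + (g : F)) = 1 := by rw [h, add_zero]
      rwa [← add_assoc, CharTwo.add_self_eq_zero, zero_add] at h2
    set d : F := ((1 : F) + (g : F))⁻¹ * e with hd_def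
    have hd : T d + T ((g : F) * d) = 1 := by
      rw [← Tadd]
      have h1 : d + (g : F) * d = ((1 : F) + (g : F)) * d := by ring
      rw [h1, hd_def, ← mul_assoc, mul_inv_cancel₀ hgne, one_mul]
      exact he
    -- produce c01 and c10
    obtain ⟨c01, hc01a, hc01b, c10, hc10a, hc10b⟩ :
        ∃ c, T c = 0 ∧ T ((g : F) * c) = 1 ∧ ∃ c', T c' = 1 ∧ T ((g : F) * c') = 0 := by
      rcases Tval d with hd0 | hd1
      · have hgd : T ((g : F) * d) = 1 := by rwa [hd0, zero_add] at hd
        refine ⟨d, hd0, hgd, ?_⟩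
        rcases Tval ((g : F) * e) with hge | hge
        · exact ⟨e, he, hge⟩
        · refine ⟨e + d, ?_, ?_⟩
          · rw [Tadd, he, hd0, add_zero]
          · rw [mul_add, Tadd, hge, hgd, CharTwo.add_self_eq_zero]
      · have hgd : T ((g : F) * d) = 0 := by
          have := hd
          rw [hd1] at this
          rwa [add_eq_left] at this
        set e2 : F := ((g : F))⁻¹ * e with he2_def
        have hge2 : T ((g : F) * e2) = 1 := by
          rw [he2_def, ← mul_assoc, mul_inv_cancel₀ (Units.ne_zero g), one_mul]
          exact he
        rcases Tval e2 with he2 | he2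
        · exact ⟨e2, he2, hge2, d, hd1, hgd⟩
        · refine ⟨e2 + d, ?_, ?_, d, hd1, hgd⟩
          · rw [Tadd, he2, hd1, CharTwo.add_self_eq_zero]
          · rw [mul_add, Tadd, hge2, hgd, add_zero]
    have hc11a : T (c01 + c10) = 1 := by rw [Tadd, hc01a, hc10a, zero_add]
    have hc11b : T ((g : F) * (c01 + c10)) = 1 := by
      rw [mul_add, Tadd, hc01b, hc10b, add_zero]
    -- the four classes
    have hA00card : (Finset.univ.filter
        (fun y : F => T y = 0 ∧ T ((g : F) * y) = 0)).card = 2 ^ (n - 2) := by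
      set A00 := Finset.univ.filter (fun y : F => T y = 0 ∧ T ((g : F) * y) = 0) with hA00def
      set A01 := Finset.univ.filter (fun y : F => T y = 0 ∧ T ((g : F) * y) = 1) with hA01def
      set A10 := Finset.univ.filter (fun y : F => T y = 1 ∧ T ((g : F) * y) = 0) with hA10def
      set A11 := Finset.univ.filter (fun y : F => T y = 1 ∧ T ((g : F) * y) = 1) with hA11def
      have hselfc : ∀ c : F, ∀ x : F, x + c + c = x := fun c x => by
        rw [add_assoc, CharTwo.add_self_eq_zero, add_zero]
      have h1 : A00.card = A01.card := by
        apply shift_card_aux _ _ c01 (hselfc c01)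
        · rintro x ⟨hx1, hx2⟩
          exact ⟨by rw [Tadd, hx1, hc01a, add_zero],
            by rw [mul_add, Tadd, hx2, hc01b, zero_add]⟩
        · rintro x ⟨hx1, hx2⟩
          exact ⟨by rw [Tadd, hx1, hc01a, add_zero],
            by rw [mul_add, Tadd, hx2, hc01b, CharTwo.add_self_eq_zero]⟩
      have h2 : A00.card = A10.card := by
        apply shift_card_aux _ _ c10 (hselfc c10)
        · rintro x ⟨hx1, hx2⟩
          exact ⟨by rw [Tadd, hx1, hc10a, zero_add],
            by rw [mul_add, Tadd, hx2, hc10b, add_zero]⟩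
        · rintro x ⟨hx1, hx2⟩
          exact ⟨by rw [Tadd, hx1, hc10a, CharTwo.add_self_eq_zero],
            by rw [mul_add, Tadd, hx2, hc10b, add_zero]⟩
      have h3 : A00.card = A11.card := by
        apply shift_card_aux _ _ (c01 + c10) (hselfc _)
        · rintro x ⟨hx1, hx2⟩
          exact ⟨by rw [Tadd, hx1, hc11a, zero_add],
            by rw [mul_add, Tadd, hx2, hc11b, zero_add]⟩
        · rintro x ⟨hx1, hx2⟩
          exact ⟨by rw [Tadd, hx1, hc11a, CharTwo.add_self_eq_zero],
            by rw [mul_add, Tadd, hx2, hc11b, CharTwo.add_self_eq_zero]⟩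
      -- partition of univ
      have hs1 := Finset.card_filter_add_card_filter_not
        (s := (Finset.univ : Finset F)) (fun y : F => T y = 0)
      have hneg1 : (Finset.univ.filter (fun y : F => ¬ T y = 0))
          = Finset.univ.filter (fun y : F => T y = 1) := by
        apply Finset.filter_congr
        intro x _
        exact ⟨fun h => (Tval x).resolve_left h,
          fun h h0 => by rw [h0] at h; exact one_ne_zero h.symm⟩
      have hs2 := Finset.card_filter_add_card_filter_not
        (s := Finset.univ.filter (fun y : F => T y = 0))
        (fun y : F => T ((g : F) * y) = 0)
      have hs3 := Finset.card_filter_add_card_filter_not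
        (s := Finset.univ.filter (fun y : F => T y = 1))
        (fun y : F => T ((g : F) * y) = 0)
      rw [Finset.filter_filter, Finset.filter_filter] at hs2 hs3
      have hneg2 : (Finset.univ.filter (fun y : F => T y = 0 ∧ ¬ T ((g : F) * y) = 0))
          = A01 := by
        apply Finset.filter_congr
        intro x _
        exact ⟨fun h => ⟨h.1, (Tval _).resolve_left h.2⟩,
          fun h => ⟨h.1, fun h0 => by rw [h0] at h; exact one_ne_zero h.2.symm⟩⟩
      have hneg3 : (Finset.univ.filter (fun y : F => T y = 1 ∧ ¬ T ((g : F) * y) = 0))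
          = A11 := by
        apply Finset.filter_congr
        intro x _
        exact ⟨fun h => ⟨h.1, (Tval _).resolve_left h.2⟩,
          fun h => ⟨h.1, fun h0 => by rw [h0] at h; exact one_ne_zero h.2.symm⟩⟩
      rw [hneg1, Finset.card_univ, hF] at hs1
      rw [hneg2] at hs2
      rw [hneg3] at hs3
      have h2n : 2 ^ n = 2 ^ (n - 2) * 4 := by
        rw [show (4 : ℕ) = 2 ^ 2 by norm_num, ← pow_add]
        congr 1; omega
      rw [hA00def] at h1 h2 h3 ⊢
      rw [hA01def] at h1 hs2
      rw [hA10def] at h2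
      rw [hA11def] at h3 hs3
      omega
    -- bijection between pairs and the class A00 minus 0
    have hbij : ((D ×ˢ D).filter (fun p => p.1 * p.2⁻¹ = g)).card
        = ((Finset.univ.filter
            (fun y : F => T y = 0 ∧ T ((g : F) * y) = 0)).erase 0).card := by
      apply Finset.card_bij (fun (p : Fˣ × Fˣ) _ => ((p.2 : Fˣ) : F))
      · intro p hp
        rw [Finset.mem_filter, Finset.mem_product] at hp
        obtain ⟨⟨h1, h2⟩, h3⟩ := hp
        rw [Finset.mem_erase]
        refine ⟨Units.ne_zero _, Finset.mem_filter.mpr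
          ⟨Finset.mem_univ _, (hDT _).mp h2, ?_⟩⟩
        have hp1 : p.1 = g * p.2 := by rw [← h3, inv_mul_cancel_right]
        have h4 := (hDT p.1).mp h1
        rw [hp1, Units.val_mul] at h4
        exact h4
      · intro a ha b hb hab
        rw [Finset.mem_filter] at ha hb
        have h2 : a.2 = b.2 := Units.ext hab
        have ha1 : a.1 = g * a.2 := by rw [← ha.2, inv_mul_cancel_right]
        have hb1 : b.1 = g * b.2 := by rw [← hb.2, inv_mul_cancel_right]
        exact Prod.ext (by rw [ha1, hb1, h2]) h2
      · intro b hb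
        rw [Finset.mem_erase, Finset.mem_filter] at hb
        obtain ⟨hb0, _, hb1, hb2⟩ := hb
        refine ⟨(g * Units.mk0 b hb0, Units.mk0 b hb0), ?_, rfl⟩
        rw [Finset.mem_filter, Finset.mem_product]
        refine ⟨⟨(hDT _).mpr ?_, (hDT _).mpr hb1⟩, mul_inv_cancel_right g _⟩
        rw [Units.val_mul]
        exact hb2
    have h0mem : (0 : F) ∈ Finset.univ.filter
        (fun y : F => T y = 0 ∧ T ((g : F) * y) = 0) :=
      Finset.mem_filter.mpr ⟨Finset.mem_univ _, Tzero, by rw [mul_zero]; exact Tzero⟩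
    rw [hbij, Finset.card_erase_of_mem h0mem, hA00card]
end

section
/- Let A be a finite abelian group of order v, let D ⊆ A be a (v,k,λ)-difference set with k > λ, and let s, g ∈ A. Then the following exact identity, expressing the final amplitude of the shifted-difference-set quantum algorithm, holds: (1 − 2k/v) − (2/(v·√(k−λ)))·∑_{χ ≠ χ₀} χ(s)·|χ(D)|²·conj(χ(g)) = 1 − 2(k − √(k−λ))/v − 2√(k−λ)·[g = s], where the sum is over all nontrivial characters χ of A, χ(D) := ∑_{d∈D} χ(d), conj denotes complex conjugation, and [g = s] is 1 if g = s and 0 otherwise. -/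
/-!
By Turyn's theorem every nontrivial character satisfies `|χ(D)|² = k - λ`: expanding
`χ(D) · conj χ(D) = ∑_{x,y ∈ D} χ(x - y)` and grouping by the difference, the difference-set
property makes the coefficient of `χ(a)` equal to `λ` off `0` and `k` at `0`, and
`∑_a χ(a) = 0`. The weight `|χ(D)|²` is therefore constant on nontrivial characters, and the
remaining sum `∑_{χ ≠ 1} χ(s - g)` is `v·[g = s] - 1` by orthogonality of characters.
-/

open Finset
open scoped Classical

section

variable {A : Type*} [AddCommGroup A] [DecidableEq A]

def IsDifferenceSet (D : Finset A) (l : ℕ) : Prop :=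
  ∀ a : A, a ≠ 0 → #((D ×ˢ D).filter (fun p => p.1 - p.2 = a)) = l

lemma card_filter_sub_eq_zero (D : Finset A) :
    #((D ×ˢ D).filter (fun p => p.1 - p.2 = 0)) = #D := by
  simp_rw [sub_eq_zero, ← diag_eq_filter, diag_card]

namespace AddChar

variable [Fintype A]

lemma sum_mul_conj_sum_eq_sum_card_filter_sub (χ : AddChar A ℂ) (D : Finset A) :
    (∑ d ∈ D, χ d) * starRingEnd ℂ (∑ d ∈ D, χ d)
      = ∑ a, (#((D ×ˢ D).filter (fun p => p.1 - p.2 = a)) : ℂ) * χ a := by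
  calc (∑ d ∈ D, χ d) * starRingEnd ℂ (∑ d ∈ D, χ d)
      = ∑ p ∈ D ×ˢ D, χ (p.1 - p.2) := by
        simp only [map_sum, ← map_neg_eq_conj, sum_mul_sum, ← sum_product', ← map_add_eq_mul,
          sub_eq_add_neg]
    _ = ∑ a, ∑ p ∈ (D ×ˢ D).filter (fun p => p.1 - p.2 = a), χ (p.1 - p.2) :=
        (sum_fiberwise_of_maps_to (fun _ _ => mem_univ _) _).symm
    _ = ∑ a, (#((D ×ˢ D).filter (fun p => p.1 - p.2 = a)) : ℂ) * χ a := by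
        refine sum_congr rfl fun a _ => ?_
        rw [sum_congr rfl fun p hp => congrArg χ (mem_filter.1 hp).2, sum_const, nsmul_eq_mul]

lemma norm_sum_sq_of_isDifferenceSet {χ : AddChar A ℂ} (hχ : χ ≠ 1) {D : Finset A} {l : ℕ}
    (hD : IsDifferenceSet D l) :
    ‖∑ d ∈ D, χ d‖ ^ 2 = (#D : ℝ) - l := by
  have hcount : ∀ a, (#((D ×ˢ D).filter (fun p => p.1 - p.2 = a)) : ℂ)
      = l + if a = 0 then (#D : ℂ) - l else 0 := by
    intro a
    split_ifs with ha
    · rw [ha, card_filter_sub_eq_zero]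
      ring
    · rw [hD a ha, add_zero]
  have hsum : ∑ a, χ a = 0 := sum_eq_zero_iff_ne_zero.2 hχ
  apply Complex.ofReal_injective
  push_cast
  rw [← Complex.mul_conj', sum_mul_conj_sum_eq_sum_card_filter_sub]
  simp only [hcount, add_mul, sum_add_distrib, ← mul_sum, hsum, ite_mul, zero_mul,
    sum_ite_eq', mem_univ, if_true, map_zero_eq_one]
  ring

lemma sum_filter_ne_one_apply (a : A) :
    ∑ χ ∈ univ.filter (fun χ : AddChar A ℂ => χ ≠ 1), χ a
      = (if a = 0 then (Fintype.card A : ℂ) else 0) - 1 := by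
  rw [filter_ne', sum_erase_eq_sub (mem_univ _), sum_apply_eq_ite, one_apply]

end AddChar

end

theorem shifted_difference_set_amplitude_general
    {A : Type*} [AddCommGroup A] [Fintype A] [DecidableEq A]
    (v k l : ℕ) (hv : Fintype.card A = v)
    (D : Finset A) (hk : D.card = k) (hkl : l < k)
    (hD : ∀ a : A, a ≠ 0 →
      ((D ×ˢ D).filter (fun p => p.1 - p.2 = a)).card = l)
    (s g : A) :
    ((1 : ℂ) - 2 * (k : ℂ) / (v : ℂ))
      - (2 / ((v : ℂ) * (Real.sqrt ((k : ℝ) - (l : ℝ)) : ℂ)))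
        * ∑ χ ∈ Finset.univ.filter (fun χ : AddChar A ℂ => χ ≠ 1),
            χ s * ((‖∑ d ∈ D, χ d‖ : ℝ) : ℂ) ^ 2 * (starRingEnd ℂ) (χ g)
      = 1 - 2 * ((k : ℂ) - (Real.sqrt ((k : ℝ) - (l : ℝ)) : ℂ)) / (v : ℂ)
        - 2 * (Real.sqrt ((k : ℝ) - (l : ℝ)) : ℂ) * (if g = s then 1 else 0) := by
  set r := Real.sqrt ((k : ℝ) - l)
  have hr_sq : (r : ℂ) ^ 2 = (k : ℂ) - l := by
    rw [← Complex.ofReal_pow, Real.sq_sqrt (sub_nonneg.2 (Nat.cast_le.2 hkl.le))]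
    push_cast; rfl
  have hv0 : (v : ℂ) ≠ 0 := Nat.cast_ne_zero.2 (hv ▸ Fintype.card_ne_zero)
  have hterm : ∀ χ ∈ univ.filter (fun χ : AddChar A ℂ => χ ≠ 1),
      χ s * ((‖∑ d ∈ D, χ d‖ : ℝ) : ℂ) ^ 2 * starRingEnd ℂ (χ g) = (r : ℂ) ^ 2 * χ (s - g) := by
    intro χ hχ
    rw [← Complex.ofReal_pow, AddChar.norm_sum_sq_of_isDifferenceSet (mem_filter.1 hχ).2 hD,
      hk, hr_sq, sub_eq_add_neg s g, AddChar.map_add_eq_mul, AddChar.map_neg_eq_conj]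
    push_cast; ring
  rw [sum_congr rfl hterm, ← mul_sum, AddChar.sum_filter_ne_one_apply, hv]
  have hr0 : (r : ℂ) ≠ 0 :=
    Complex.ofReal_ne_zero.2 (Real.sqrt_pos.2 (sub_pos.2 (Nat.cast_lt.2 hkl))).ne'
  by_cases hgs : g = s
  · simp only [hgs, sub_self, if_true]
    field_simp
    ring
  · simp only [hgs, sub_eq_zero, Ne.symm hgs, if_false]
    field_simp
    ring

/-- Exact amplitude identity of the shifted-difference-set quantum algorithm:
for a `(v,k,λ)`-difference set `D` (with `k > λ`) in a finite abelian group `A`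
and any `s, g ∈ A`,
`(1 − 2k/v) − (2/(v√(k−λ)))·∑_{χ ≠ χ₀} χ(s)·|χ(D)|²·conj(χ(g))
  = 1 − 2(k − √(k−λ))/v − 2√(k−λ)·[g = s]`. -/
theorem shifted_difference_set_amplitude
    {A : Type*} [AddCommGroup A] [Fintype A] [DecidableEq A]
    (v k l : ℕ) (hv : Fintype.card A = v)
    (D : Finset A) (hk : D.card = k) (hl : 1 ≤ l) (hkl : l < k)
    (hD : ∀ a : A, a ≠ 0 →
      ((D ×ˢ D).filter (fun p => p.1 - p.2 = a)).card = l)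
    (s g : A) :
    ((1 : ℂ) - 2 * (k : ℂ) / (v : ℂ))
      - (2 / ((v : ℂ) * (Real.sqrt ((k : ℝ) - (l : ℝ)) : ℂ)))
        * ∑ χ ∈ Finset.univ.filter (fun χ : AddChar A ℂ => χ ≠ 1),
            χ s * ((‖∑ d ∈ D, χ d‖ : ℝ) : ℂ) ^ 2 * (starRingEnd ℂ) (χ g)
      = 1 - 2 * ((k : ℂ) - (Real.sqrt ((k : ℝ) - (l : ℝ)) : ℂ)) / (v : ℂ)
        - 2 * (Real.sqrt ((k : ℝ) - (l : ℝ)) : ℂ) * (if g = s then 1 else 0) :=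
  shifted_difference_set_amplitude_general v k l hv D hk hkl hD s g
end
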